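/- For every k ∈ ℕ, the k-th absolute moment of Ψ is finite and satisfies ∫_{-∞}^{∞} |h|^k Ψ(h) dh ≤ (B^β − 1)/((B^β + 1)(k + 1)) + (q + 1/q) · B^β · k! / (β^k (ln B)^k). -/

import Mathlib

open MeasureTheory Real Filter

noncomputable def nu (B q β x : ℝ) : ℝ := 1 / (1 + q * B ^ (-(β * x)))

noncomputable def G (B q β x : ℝ) : ℝ := (nu B q β (x + 1) - nu B q β (x - 1)) / 2

noncomputable def Psi (B q β x : ℝ) : ℝ := (G B q β x + G B (1 / q) β x) / 2

noncomputable def modCont (f : ℝ → ℝ) (θ : ℝ) : ℝ :=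
  sSup {d : ℝ | ∃ x y : ℝ, |x - y| ≤ θ ∧ d = |f x - f y|}

noncomputable def supNorm (f : ℝ → ℝ) : ℝ := ⨆ x : ℝ, |f x|

noncomputable def opA (B q β : ℝ) (n : ℕ) (f : ℝ → ℝ) (x : ℝ) : ℝ :=
  ∫ v : ℝ, f (v / n) * Psi B q β (n * x - v)

noncomputable def opAStar (B q β : ℝ) (n : ℕ) (f : ℝ → ℝ) (x : ℝ) : ℝ :=
  (n : ℝ) * ∫ v : ℝ, (∫ h in (v / n)..((v + 1) / n), f h) * Psi B q β (n * x - v)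

noncomputable def opABar (B q β : ℝ) (r : ℕ) (w : ℕ → ℝ) (n : ℕ) (f : ℝ → ℝ) (x : ℝ) : ℝ :=
  ∫ v : ℝ, (∑ s ∈ Finset.Icc 1 r, w s * f (v / n + (s : ℝ) / ((n : ℝ) * (r : ℝ)))) *
    Psi B q β (n * x - v)


open Set

lemma nu_rw (B q β : ℝ) (hB : 1 < B) (x : ℝ) :
    nu B q β x = 1 / (1 + q * Real.exp (-(β * Real.log B * x))) := by
  unfold nu
  rw [Real.rpow_def_of_pos (by linarith : (0:ℝ) < B),
    show Real.log B * (-(β * x)) = -(β * Real.log B * x) by ring]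

lemma diff_nonneg' {c a : ℝ} (hc : 0 < c) (ha : 0 < a) :
    0 ≤ 1 / (1 + a * Real.exp (-c)) - 1 / (1 + a * Real.exp c) := by
  have h1 : Real.exp (-c) ≤ Real.exp c := Real.exp_le_exp.2 (by linarith)
  have h2 : (0:ℝ) < 1 + a * Real.exp (-c) := by positivity
  have h3 : (0:ℝ) < 1 + a * Real.exp c := by positivity
  have : 1 / (1 + a * Real.exp c) ≤ 1 / (1 + a * Real.exp (-c)) :=
    one_div_le_one_div_of_le h2 (by nlinarith)
  linarith

lemma diff_le_mul {c a : ℝ} (hc : 0 < c) (ha : 0 < a) :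
    1 / (1 + a * Real.exp (-c)) - 1 / (1 + a * Real.exp c) ≤
      (Real.exp c - Real.exp (-c)) * a := by
  have h1 : Real.exp (-c) ≤ Real.exp c := Real.exp_le_exp.2 (by linarith)
  have h2 : (0:ℝ) < 1 + a * Real.exp (-c) := by positivity
  have h3 : (0:ℝ) < 1 + a * Real.exp c := by positivity
  rw [div_sub_div _ _ (ne_of_gt h2) (ne_of_gt h3), div_le_iff₀ (by positivity)]
  have hX : 0 ≤ (Real.exp c - Real.exp (-c)) * a := mul_nonneg (by linarith) ha.le
  have hY : 0 ≤ (1 + a * Real.exp (-c)) * (1 + a * Real.exp c) - 1 := by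
    nlinarith [mul_pos ha (Real.exp_pos c), mul_pos ha (Real.exp_pos (-c)),
      mul_pos (mul_pos ha (Real.exp_pos (-c))) (mul_pos ha (Real.exp_pos c))]
  nlinarith [mul_nonneg hX hY]

lemma diff_le_div {c a : ℝ} (hc : 0 < c) (ha : 0 < a) :
    1 / (1 + a * Real.exp (-c)) - 1 / (1 + a * Real.exp c) ≤
      (Real.exp c - Real.exp (-c)) / a := by
  have h1 : Real.exp (-c) ≤ Real.exp c := Real.exp_le_exp.2 (by linarith)
  have hte : Real.exp (-c) * Real.exp c = 1 := by rw [← Real.exp_add]; simp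
  have h2 : (0:ℝ) < 1 + a * Real.exp (-c) := by positivity
  have h3 : (0:ℝ) < 1 + a * Real.exp c := by positivity
  rw [div_sub_div _ _ (ne_of_gt h2) (ne_of_gt h3), div_le_div_iff₀ (by positivity) ha]
  have hD : (1 + a * Real.exp (-c)) * (1 + a * Real.exp c)
      = 1 + a * Real.exp (-c) + a * Real.exp c + a * a := by
    linear_combination (a * a) * hte
  rw [hD]
  have hs : 0 ≤ Real.exp c - Real.exp (-c) := by linarith
  nlinarith [mul_nonneg hs (mul_nonneg ha.le (Real.exp_pos c).le),
    mul_nonneg hs (mul_nonneg ha.le (Real.exp_pos (-c)).le), hs]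

lemma G_eq (B q β : ℝ) (hB : 1 < B) (h : ℝ) :
    G B q β h =
      (1 / (1 + (q * Real.exp (-(β * Real.log B * h))) * Real.exp (-(β * Real.log B)))
        - 1 / (1 + (q * Real.exp (-(β * Real.log B * h))) * Real.exp (β * Real.log B))) / 2 := by
  unfold G
  rw [nu_rw B q β hB, nu_rw B q β hB]
  congr 2
  · rw [show -(β * Real.log B * (h+1)) = -(β * Real.log B * h) + -(β * Real.log B) by ring,
      Real.exp_add]; ring
  · rw [show -(β * Real.log B * (h-1)) = -(β * Real.log B * h) + (β * Real.log B) by ring,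
      Real.exp_add]; ring

lemma Psi_nonneg (B q β : ℝ) (hB : 1 < B) (hq : 0 < q) (hβ : 0 < β) (h : ℝ) :
    0 ≤ Psi B q β h := by
  have hc : 0 < β * Real.log B := mul_pos hβ (Real.log_pos hB)
  have h1 := diff_nonneg' hc (mul_pos hq (Real.exp_pos (-(β * Real.log B * h))))
  have h2 := diff_nonneg' hc (mul_pos (by positivity : (0:ℝ) < 1/q)
    (Real.exp_pos (-(β * Real.log B * h))))
  rw [Psi, G_eq B q β hB, G_eq B (1/q) β hB]
  linarith

lemma Psi_le (B q β : ℝ) (hB : 1 < B) (hq : 0 < q) (hβ : 0 < β) (h : ℝ) :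
    Psi B q β h ≤ (q + 1/q) * (β * Real.log B) * Real.exp (β * Real.log B) / 2 *
      Real.exp (-(β * Real.log B * |h|)) := by
  set c := β * Real.log B with hcdef
  have hc : 0 < c := mul_pos hβ (Real.log_pos hB)
  have hEh := Real.exp_pos (-(c * h))
  have key : Real.exp c - Real.exp (-c) ≤ 2 * c * Real.exp c := by
    have h1 : Real.exp (-c) * Real.exp c = 1 := by rw [← Real.exp_add]; simp
    have h2 : 1 + -(2*c) ≤ Real.exp (-(2*c)) := by linarith [Real.add_one_le_exp (-(2*c))]
    have h3 : Real.exp (-(2*c)) = Real.exp (-c) * Real.exp (-c) := by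
      rw [← Real.exp_add]; ring_nf
    nlinarith [Real.exp_pos c, Real.exp_pos (-c)]
  have key2 : (Real.exp c - Real.exp (-c)) * ((q + 1/q) * Real.exp (-(c * |h|)))
      ≤ 2 * c * Real.exp c * ((q + 1/q) * Real.exp (-(c * |h|))) :=
    mul_le_mul_of_nonneg_right key (by positivity)
  rw [Psi, G_eq B q β hB, G_eq B (1/q) β hB]
  simp only [← hcdef]
  rcases le_or_gt 0 h with hh | hh
  · have habs : |h| = h := abs_of_nonneg hh
    have b1 := diff_le_mul hc (mul_pos hq hEh)
    have b2 := diff_le_mul hc (mul_pos (by positivity : (0:ℝ) < 1/q) hEh)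
    rw [habs] at key2 ⊢
    nlinarith [b1, b2, key2]
  · have habs : |h| = -h := abs_of_neg hh
    have hq' : (0:ℝ) < 1/q := by positivity
    have b1 := diff_le_div hc (mul_pos hq hEh)
    have b2 := diff_le_div hc (mul_pos hq' hEh)
    have e1 : (Real.exp c - Real.exp (-c)) / (q * Real.exp (-(c * h)))
        = (Real.exp c - Real.exp (-c)) * (1/q) * Real.exp (-(c * |h|)) := by
      rw [habs, show -(c * -h) = c * h by ring, div_eq_mul_inv, mul_inv,
        show (Real.exp (-(c*h)))⁻¹ = Real.exp (c*h) by rw [← Real.exp_neg, neg_neg]]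
      ring
    have e2 : (Real.exp c - Real.exp (-c)) / (1/q * Real.exp (-(c * h)))
        = (Real.exp c - Real.exp (-c)) * q * Real.exp (-(c * |h|)) := by
      rw [habs, show -(c * -h) = c * h by ring, div_eq_mul_inv, mul_inv,
        show (Real.exp (-(c*h)))⁻¹ = Real.exp (c*h) by rw [← Real.exp_neg, neg_neg],
        one_div, inv_inv]
      ring
    rw [e1] at b1
    rw [e2] at b2
    nlinarith [b1, b2, key2]

lemma integrable_abs_comp {f : ℝ → ℝ} (hf : IntegrableOn f (Ioi 0)) :
    Integrable fun x => f |x| := by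
  have h1 : IntegrableOn (fun x => f |x|) (Ioi 0) := by
    refine hf.congr_fun (fun x hx => ?_) measurableSet_Ioi
    rw [abs_of_pos hx]
  have h2 : IntegrableOn (fun x => f |x|) (Iic 0) := by
    rw [← Measure.map_neg_eq_self (volume : Measure ℝ)]
    have m : MeasurableEmbedding fun x : ℝ => -x := (Homeomorph.neg ℝ).measurableEmbedding
    rw [m.integrableOn_map_iff]
    simp_rw [Function.comp_def, abs_neg, neg_preimage, neg_Iic, neg_zero]
    exact Iff.mpr integrableOn_Ici_iff_integrableOn_Ioi h1
  rw [← integrableOn_univ, ← Set.Iic_union_Ioi (a := (0:ℝ))]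
  exact h2.union h1

lemma nu_continuous (B q β : ℝ) (hB : 1 < B) (hq : 0 < q) : Continuous (nu B q β) := by
  have : nu B q β = fun x => 1 / (1 + q * Real.exp (-(β * Real.log B * x))) :=
    funext (nu_rw B q β hB)
  rw [this]
  refine continuous_const.div ?_ fun x => by positivity
  exact continuous_const.add (continuous_const.mul
    (Real.continuous_exp.comp (continuous_const.mul continuous_id).neg))

lemma Psi_continuous (B q β : ℝ) (hB : 1 < B) (hq : 0 < q) : Continuous (Psi B q β) := by
  have h1 := nu_continuous B q β hB hq
  have h2 := nu_continuous B (1/q) β hB (by positivity)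
  unfold Psi G
  exact ((((h1.comp (continuous_id.add continuous_const)).sub
    (h1.comp (continuous_id.sub continuous_const))).div_const 2).add
    (((h2.comp (continuous_id.add continuous_const)).sub
    (h2.comp (continuous_id.sub continuous_const))).div_const 2)).div_const 2


/-- the k-th absolute moment of `Ψ` is finite with the stated bound. -/
theorem Psi_abs_moment_le (B q β : ℝ) (hB : 1 < B) (hq : 0 < q) (hβ : 0 < β) (k : ℕ) :
    Integrable (fun h : ℝ => |h| ^ k * Psi B q β h) ∧
    ∫ h : ℝ, |h| ^ k * Psi B q β h ≤
      (B ^ β - 1) / ((B ^ β + 1) * ((k : ℝ) + 1)) +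
        (q + 1 / q) * B ^ β * (Nat.factorial k : ℝ) / (β ^ k * (Real.log B) ^ k) := by
  have hB0 : (0:ℝ) < B := by linarith
  have hc : 0 < β * Real.log B := mul_pos hβ (Real.log_pos hB)
  set c : ℝ := β * Real.log B with hcdef
  set C : ℝ := (q + 1/q) * c * Real.exp c / 2 with hCdef
  have hC : 0 < C := by
    have : (0:ℝ) < q + 1/q := by positivity
    positivity
  -- integrability of the dominating function on (0, ∞)
  have hI : IntegrableOn (fun t : ℝ => t ^ k * (C * Real.exp (-(c * t)))) (Ioi 0) := by
    have hI0 := integrableOn_rpow_mul_exp_neg_mul_rpow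
      (s := (k:ℝ)) (p := 1) (by have := Nat.cast_nonneg (α := ℝ) k; linarith) one_pos hc
    refine IntegrableOn.congr_fun (hI0.const_mul C) (fun x hx => ?_) measurableSet_Ioi
    simp only [Real.rpow_one, Real.rpow_natCast, neg_mul]
    ring
  have hgInt : Integrable (fun x : ℝ => |x| ^ k * (C * Real.exp (-(c * |x|)))) :=
    integrable_abs_comp (f := fun t : ℝ => t ^ k * (C * Real.exp (-(c * t)))) hI
  -- pointwise bound
  have hble : ∀ x : ℝ, |x| ^ k * Psi B q β x ≤ |x| ^ k * (C * Real.exp (-(c * |x|))) := by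
    intro x
    refine mul_le_mul_of_nonneg_left ?_ (pow_nonneg (abs_nonneg x) k)
    have := Psi_le B q β hB hq hβ x
    calc Psi B q β x ≤ (q + 1/q) * (β * Real.log B) * Real.exp (β * Real.log B) / 2 *
        Real.exp (-(β * Real.log B * |x|)) := this
      _ = C * Real.exp (-(c * |x|)) := by rw [hCdef, hcdef]
  have hInt : Integrable (fun h : ℝ => |h| ^ k * Psi B q β h) := by
    refine hgInt.mono' ?_ (ae_of_all _ fun x => ?_)
    · exact (((continuous_abs.pow k).mul (Psi_continuous B q β hB hq))).aestronglyMeasurable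
    · rw [Real.norm_eq_abs, abs_mul, abs_pow, abs_abs,
        abs_of_nonneg (Psi_nonneg B q β hB hq hβ x)]
      exact hble x
  refine ⟨hInt, ?_⟩
  -- value of the dominating integral
  have hval : (∫ t in Ioi (0:ℝ), t ^ k * (C * Real.exp (-(c * t))))
      = C * ((1/c) ^ (k+1) * (Nat.factorial k : ℝ)) := by
    have h0 := integral_rpow_mul_exp_neg_mul_Ioi (a := (k:ℝ)+1) (r := c) (by positivity) hc
    simp only [add_sub_cancel_right] at h0
    rw [show ((k:ℝ)+1) = ((k+1 : ℕ) : ℝ) by push_cast; ring, Real.rpow_natCast] at h0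
    simp_rw [Real.rpow_natCast] at h0
    have h1 : (∫ t in Ioi (0:ℝ), t ^ k * (C * Real.exp (-(c * t))))
        = C * ∫ t in Ioi (0:ℝ), t ^ k * Real.exp (-(c * t)) := by
      rw [← integral_const_mul]
      simp_rw [mul_left_comm]
    rw [h1, h0, show ((k+1:ℕ):ℝ) = (k:ℝ)+1 by push_cast; ring, Real.Gamma_nat_eq_factorial]
  have hmono : (∫ h : ℝ, |h| ^ k * Psi B q β h)
      ≤ ∫ x : ℝ, |x| ^ k * (C * Real.exp (-(c * |x|))) :=
    integral_mono hInt hgInt hble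
  have habs : (∫ x : ℝ, |x| ^ k * (C * Real.exp (-(c * |x|))))
      = 2 * ∫ t in Ioi (0:ℝ), t ^ k * (C * Real.exp (-(c * t))) :=
    integral_comp_abs (f := fun t : ℝ => t ^ k * (C * Real.exp (-(c * t))))
  have hBβ : B ^ β = Real.exp c := by
    rw [Real.rpow_def_of_pos hB0, hcdef, mul_comm]
  have hfirst : 0 ≤ (B ^ β - 1) / ((B ^ β + 1) * ((k : ℝ) + 1)) := by
    have h1 : 1 ≤ B ^ β := by rw [hBβ]; exact Real.one_le_exp hc.le
    have h2 : (0:ℝ) < (B ^ β + 1) * ((k : ℝ) + 1) := by positivity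
    exact div_nonneg (by linarith) h2.le
  have hsecond : 2 * (C * ((1/c) ^ (k+1) * (Nat.factorial k : ℝ)))
      = (q + 1 / q) * B ^ β * (Nat.factorial k : ℝ) / (β ^ k * (Real.log B) ^ k) := by
    rw [hBβ, show β ^ k * (Real.log B) ^ k = c ^ k from (mul_pow β (Real.log B) k).symm,
      hCdef, div_pow, one_pow]
    have hck : c ^ (k+1) ≠ 0 := pow_ne_zero _ (ne_of_gt hc)
    have hq0 : q ≠ 0 := ne_of_gt hq
    field_simp
    ring
  calc (∫ h : ℝ, |h| ^ k * Psi B q β h)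
      ≤ 2 * ∫ t in Ioi (0:ℝ), t ^ k * (C * Real.exp (-(c * t))) := by rw [← habs]; exact hmono
    _ = (q + 1 / q) * B ^ β * (Nat.factorial k : ℝ) / (β ^ k * (Real.log B) ^ k) := by
        rw [hval]; exact hsecond
    _ ≤ _ := le_add_of_nonneg_left hfirst
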